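/- arXiv:2007.02490 — 3 statements merged into one kernel-verified Lean document; each statement's English description precedes it below -/
import Mathlib

section
/- Let U be a matrix on (ℂ^a ⊗ ℂ^b) ⊗ ℂ^c written as U = ∑_{j=1}^r Q_j ⊗ R_j with Q_1, ..., Q_r linearly independent matrices on ℂ^a ⊗ ℂ^b and R_1, ..., R_r linearly independent c×c matrices. If Q_1, ..., Q_n (for some n ≤ r) are product matrices (each Q_j = X'_j ⊗ Y'_j for some a×a matrix X'_j and b×b matrix Y'_j), then there exists a decomposition U = ∑_{i=1}^{sr(U)} X_i ⊗ Y_i ⊗ Z_i of minimal length in which X_j ⊗ Y_j = Q_j for every j = 1, ..., n. -/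
/-!
Take a decomposition `U = ∑_{i < s} (A_i ⊗ B_i) ⊗ C_i` of minimal length `s = sr(U)`.
Contracting the third factor against functionals dual to the independent `R_j` shows that every
`Q_j` lies in the span of the products `P_i = A_i ⊗ B_i`. By Steinitz exchange, the independent
`Q_1, …, Q_n` can be completed by some of the `P_i`, padded with zeros, to a list `E_0, …, E_{s-1}`
of product matrices whose span contains every `P_i`. Expanding the `P_i` in the `E_k` and
regrouping gives `U = ∑_k E_k ⊗ Z_k`, a decomposition of the same length starting with the `Q_j`.
-/

open Matrix Kronecker

/-- Tripartite Schmidt rank of a matrix on (ℂ^a ⊗ ℂ^b) ⊗ ℂ^c. -/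
noncomputable def sr3 {a b c : ℕ}
    (U : Matrix ((Fin a × Fin b) × Fin c) ((Fin a × Fin b) × Fin c) ℂ) : ℕ :=
  sInf {r | ∃ (A : Fin r → Matrix (Fin a) (Fin a) ℂ)
    (B : Fin r → Matrix (Fin b) (Fin b) ℂ) (C : Fin r → Matrix (Fin c) (Fin c) ℂ),
    U = ∑ j, (A j ⊗ₖ B j) ⊗ₖ C j}

theorem LinearMap.exists_sum_eq_sum_of_mem_span {R M N P : Type*} [CommSemiring R]
    [AddCommMonoid M] [AddCommMonoid N] [AddCommMonoid P] [Module R M] [Module R N] [Module R P]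
    (f : M →ₗ[R] N →ₗ[R] P) {ι κ : Type*} [Fintype κ] {u : κ → M} (w : κ → N) {v : ι → M}
    {s : Finset ι} (hu : ∀ i, u i ∈ Submodule.span R (v '' s)) :
    ∃ z : ι → N, ∑ i, f (u i) (w i) = ∑ k ∈ s, f (v k) (z k) := by
  choose c hc using fun i => (Submodule.mem_span_image_finset_iff_exists_fun' R).mp (hu i)
  refine ⟨fun k => ∑ i, c i k • w i, ?_⟩
  simp only [← hc, map_sum, map_smul, LinearMap.sum_apply, LinearMap.smul_apply]
  exact Finset.sum_comm

theorem exists_nat_family_extending {α : Type*} [Zero α] {n N : ℕ} (Q : Fin n → α)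
    (D : Finset α) (hN : n + D.card ≤ N) :
    ∃ E : ℕ → α, (∀ j : Fin n, E j = Q j) ∧ (∀ m, n ≤ m → E m = 0 ∨ E m ∈ D) ∧
      Set.range Q ∪ ↑D ⊆ E '' ↑(Finset.range N) := by
  refine ⟨fun m => if h : m < n then Q ⟨m, h⟩ else D.toList.getD (m - n) 0, ?_, ?_, ?_⟩
  · intro j
    simp [j.isLt]
  · intro m hm
    simp only [not_lt.mpr hm, dite_false]
    by_cases hlt : m - n < D.toList.length
    · rw [List.getD_eq_getElem _ _ hlt]
      exact Or.inr (Finset.mem_toList.mp (List.getElem_mem _))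
    · exact Or.inl (List.getD_eq_default _ _ (not_lt.mp hlt))
  · rintro x (⟨j, rfl⟩ | hx)
    · exact ⟨j, by simp; omega, by simp [j.isLt]⟩
    · obtain ⟨k, hk, rfl⟩ := List.mem_iff_getElem.mp (Finset.mem_toList.mpr hx)
      refine ⟨n + k, by rw [Finset.length_toList] at hk; simp; omega, ?_⟩
      simp [List.getElem?_eq_getElem hk]

section

variable {K V : Type*} [Field K] [AddCommGroup V] [Module K V]

theorem LinearIndependent.exists_dual_apply_eq_ite {ι : Type*} [DecidableEq ι] {R : ι → V}
    (hR : LinearIndependent K R) (j : ι) :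
    ∃ g : V →ₗ[K] K, ∀ k, g (R k) = if k = j then 1 else 0 := by
  obtain ⟨g, hg⟩ := LinearMap.exists_extend (Finsupp.lapply j ∘ₗ hR.repr)
  refine ⟨g, fun k => ?_⟩
  have hk := LinearMap.congr_fun hg ⟨R k, Submodule.subset_span ⟨k, rfl⟩⟩
  rw [LinearMap.comp_apply, LinearMap.comp_apply, hR.repr_eq_single k _ rfl] at hk
  simpa [Finsupp.single_apply] using hk

open Submodule Set in
theorem LinearIndependent.exists_finset_subset_range_of_mem_span {ι : Type*} [Fintype ι]
    {P : ι → V} {n : ℕ} {Q : Fin n → V} (hQ : LinearIndependent K Q)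
    (hQP : ∀ j, Q j ∈ span K (range P)) :
    ∃ D : Finset V, ↑D ⊆ range P ∧ n + D.card ≤ Fintype.card ι ∧
      span K (range P) ≤ span K (range Q ∪ D) := by
  classical
  have hsub : range Q ⊆ range Q ∪ range P := subset_union_left
  set b := hQ.linearIndepOn_id.extend hsub
  have hb : b ⊆ range Q ∪ range P := hQ.linearIndepOn_id.extend_subset hsub
  have hQb : range Q ⊆ b := hQ.linearIndepOn_id.subset_extend hsub
  have hspan : span K b = span K (range P) := by
    rw [hQ.linearIndepOn_id.span_extend_eq_span, span_union,
      sup_eq_right.mpr (span_le.mpr (range_subset_iff.mpr hQP))]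
  have : Fintype b := (((finite_range Q).union (finite_range P)).subset hb).fintype
  refine ⟨b.toFinset \ Finset.univ.image Q, ?_, ?_, ?_⟩
  · intro x hx
    simp only [Finset.coe_sdiff, coe_toFinset, Finset.coe_image, Finset.coe_univ,
      image_univ] at hx
    exact (hb hx.1).resolve_left hx.2
  · have hcard := Finset.card_sdiff_add_card_eq_card (s := Finset.univ.image Q) (t := b.toFinset)
      (by simpa using hQb)
    rw [Finset.card_image_of_injective _ hQ.injective, Finset.card_univ, Fintype.card_fin] at hcard
    have hrank : b.toFinset.card ≤ Fintype.card ι := by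
      rw [← finrank_span_set_eq_card (hQ.linearIndepOn_id.linearIndepOn_extend hsub), hspan]
      exact finrank_range_le_card P
    omega
  · rw [← hspan]
    refine span_mono fun x hx => ?_
    by_cases hxQ : x ∈ range Q
    · exact Or.inl hxQ
    · exact Or.inr (by simpa [hx] using hxQ)

open Submodule Set in
theorem LinearIndependent.exists_nat_family_of_mem_span {ι : Type*} [Fintype ι] {P : ι → V}
    {n N : ℕ} {Q : Fin n → V} (hQ : LinearIndependent K Q) (hQP : ∀ j, Q j ∈ span K (range P))
    (hN : Fintype.card ι ≤ N) :
    ∃ E : ℕ → V, (∀ j : Fin n, E j = Q j) ∧ (∀ m, n ≤ m → E m = 0 ∨ E m ∈ range P) ∧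
      ∀ i, P i ∈ span K (E '' ↑(Finset.range N)) := by
  obtain ⟨D, hDP, hcard, hspan⟩ := hQ.exists_finset_subset_range_of_mem_span hQP
  obtain ⟨E, hEQ, hED, hrange⟩ := exists_nat_family_extending Q D (hcard.trans hN)
  exact ⟨E, hEQ, fun m hm => (hED m hm).imp_right fun h => hDP h,
    fun i => span_mono hrange (hspan (subset_span ⟨i, rfl⟩))⟩

end

section

variable {K : Type*} [Field K]

def Matrix.kroneckerContractRight {I I' J J' : Type*} (φ : Matrix J J' K →ₗ[K] K) :
    Matrix (I × J) (I' × J') K →ₗ[K] Matrix I I' K :=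
  φ.mapMatrix ∘ₗ (compLinearEquiv I I' J J' K K).symm.toLinearMap

theorem Matrix.kroneckerContractRight_kronecker {I I' J J' : Type*}
    (φ : Matrix J J' K →ₗ[K] K) (S : Matrix I I' K) (T : Matrix J J' K) :
    kroneckerContractRight φ (S ⊗ₖ T) = φ T • S := by
  ext i i'
  have hblock : (compLinearEquiv I I' J J' K K).symm (S ⊗ₖ T) i i' = S i i' • T := rfl
  rw [kroneckerContractRight, LinearMap.comp_apply, LinearMap.mapMatrix_apply, map_apply,
    LinearEquiv.coe_coe, hblock, map_smul, smul_eq_mul, smul_apply, smul_eq_mul, mul_comm]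

theorem Matrix.mem_span_range_of_sum_kronecker_eq {I I' J J' ι κ : Type*} [Fintype ι] [Fintype κ]
    {Q : ι → Matrix I I' K} {R : ι → Matrix J J' K} {P : κ → Matrix I I' K}
    {C : κ → Matrix J J' K} (hR : LinearIndependent K R)
    (h : ∑ j, Q j ⊗ₖ R j = ∑ i, P i ⊗ₖ C i) (j : ι) :
    Q j ∈ Submodule.span K (Set.range P) := by
  classical
  obtain ⟨g, hg⟩ := hR.exists_dual_apply_eq_ite j
  have h' := congr_arg (kroneckerContractRight g) h
  simp only [map_sum, kroneckerContractRight_kronecker, hg, ite_smul, one_smul, zero_smul,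
    Finset.sum_ite_eq', Finset.mem_univ, if_true] at h'
  rw [h']
  exact Submodule.sum_mem _ fun i _ => Submodule.smul_mem _ _ (Submodule.subset_span ⟨i, rfl⟩)

end

theorem Matrix.exists_eq_sum_kronecker_kronecker {R α β γ α' β' γ' : Type*} [Semiring R]
    [Finite α] [Finite β] [Finite γ] [Finite α'] [Finite β'] [Finite γ']
    (M : Matrix ((α × β) × γ) ((α' × β') × γ') R) :
    ∃ (r : ℕ) (A : Fin r → Matrix α α' R) (B : Fin r → Matrix β β' R)
      (C : Fin r → Matrix γ γ' R), M = ∑ j, (A j ⊗ₖ B j) ⊗ₖ C j := by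
  classical
  induction M using Matrix.induction_on' with
  | h_zero => exact ⟨0, 0, 0, 0, by simp⟩
  | h_add M N hM hN =>
    obtain ⟨r, A, B, C, rfl⟩ := hM
    obtain ⟨r', A', B', C', rfl⟩ := hN
    refine ⟨r + r', Fin.append A A', Fin.append B B', Fin.append C C', ?_⟩
    simp [Fin.sum_univ_add]
  | h_std_basis i j x =>
    refine ⟨1, fun _ => single i.1.1 j.1.1 1, fun _ => single i.1.2 j.1.2 1,
      fun _ => single i.2 j.2 x, ?_⟩
    simp [single_kronecker_single]

theorem exists_eq_sum_kronecker_kronecker_sr3 {a b c : ℕ}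
    (U : Matrix ((Fin a × Fin b) × Fin c) ((Fin a × Fin b) × Fin c) ℂ) :
    ∃ (A : Fin (sr3 U) → Matrix (Fin a) (Fin a) ℂ) (B : Fin (sr3 U) → Matrix (Fin b) (Fin b) ℂ)
      (C : Fin (sr3 U) → Matrix (Fin c) (Fin c) ℂ), U = ∑ j, (A j ⊗ₖ B j) ⊗ₖ C j :=
  Nat.sInf_mem (exists_eq_sum_kronecker_kronecker U)

theorem stmt1 {a b c r n : ℕ}
    (U : Matrix ((Fin a × Fin b) × Fin c) ((Fin a × Fin b) × Fin c) ℂ)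
    (Q : Fin r → Matrix (Fin a × Fin b) (Fin a × Fin b) ℂ)
    (R : Fin r → Matrix (Fin c) (Fin c) ℂ)
    (hQ : LinearIndependent ℂ Q) (hR : LinearIndependent ℂ R)
    (hU : U = ∑ j, Q j ⊗ₖ R j)
    (hn : n ≤ r)
    (X' : Fin n → Matrix (Fin a) (Fin a) ℂ) (Y' : Fin n → Matrix (Fin b) (Fin b) ℂ)
    (hprod : ∀ j : Fin n, Q (Fin.castLE hn j) = X' j ⊗ₖ Y' j) :
    ∃ (X : ℕ → Matrix (Fin a) (Fin a) ℂ) (Y : ℕ → Matrix (Fin b) (Fin b) ℂ)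
      (Z : ℕ → Matrix (Fin c) (Fin c) ℂ),
      U = ∑ i ∈ Finset.range (sr3 U), (X i ⊗ₖ Y i) ⊗ₖ Z i ∧
      ∀ j : Fin n, X (j : ℕ) ⊗ₖ Y (j : ℕ) = Q (Fin.castLE hn j) := by
  obtain ⟨A, B, C, hABC⟩ := exists_eq_sum_kronecker_kronecker_sr3 U
  have hQP := mem_span_range_of_sum_kronecker_eq (P := fun i => A i ⊗ₖ B i) hR (hU.symm.trans hABC)
  obtain ⟨E, hEQ, hEP, hPE⟩ := (hQ.comp _ (Fin.castLE_injective hn)).exists_nat_family_of_mem_span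
    (fun j => hQP _) (Fintype.card_fin (sr3 U)).le
  have hEprod : ∀ m, ∃ x y, x ⊗ₖ y = E m := by
    intro m
    by_cases hm : m < n
    · exact ⟨X' ⟨m, hm⟩, Y' ⟨m, hm⟩, by rw [← hprod, hEQ ⟨m, hm⟩]; rfl⟩
    · rcases hEP m (not_lt.mp hm) with h | ⟨i, h⟩
      · exact ⟨0, 0, by rw [h, zero_kronecker]⟩
      · exact ⟨A i, B i, h⟩
  choose X Y hXY using hEprod
  obtain ⟨Z, hZ⟩ := (kroneckerBilinear (R := ℂ)).exists_sum_eq_sum_of_mem_span C hPE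
  refine ⟨X, Y, Z, ?_, fun j => (hXY j).trans (hEQ j)⟩
  simp only [hXY]
  exact hABC.trans hZ
end

section
/- The three-qubit Fredkin gate F₃ = S₀⊗I₂⊗I₂ + S₃⊗(S₀⊗S₀ + S₁⊗S₂ + S₂⊗S₁ + S₃⊗S₃) (an 8×8 complex matrix, where the 4×4 factor is the swap gate) has Schmidt rank exactly 4. -/
open Matrix Kronecker Complex

/-- The tripartite Schmidt rank of an 8×8 complex matrix, viewed as a matrix on
ℂ² ⊗ ℂ² ⊗ ℂ² via Kronecker products: the least `r` such that
`U = ∑ j, A j ⊗ₖ (B j ⊗ₖ C j)` with 2×2 matrices `A j`, `B j`, `C j`. -/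
noncomputable def sr (U : Matrix (Fin 2 × Fin 2 × Fin 2) (Fin 2 × Fin 2 × Fin 2) ℂ) : ℕ :=
  sInf {r | ∃ A B C : Fin r → Matrix (Fin 2) (Fin 2) ℂ,
    U = ∑ j, A j ⊗ₖ (B j ⊗ₖ C j)}

def S0 : Matrix (Fin 2) (Fin 2) ℂ := !![1, 0; 0, 0]
def S1 : Matrix (Fin 2) (Fin 2) ℂ := !![0, 1; 0, 0]
def S2 : Matrix (Fin 2) (Fin 2) ℂ := !![0, 0; 1, 0]
def S3 : Matrix (Fin 2) (Fin 2) ℂ := !![0, 0; 0, 1]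
def σ1 : Matrix (Fin 2) (Fin 2) ℂ := !![0, 1; 1, 0]
def σ2 : Matrix (Fin 2) (Fin 2) ℂ := !![0, -I; I, 0]
def σ3 : Matrix (Fin 2) (Fin 2) ℂ := !![1, 0; 0, -1]
def I2 : Matrix (Fin 2) (Fin 2) ℂ := 1

noncomputable def F₃ : Matrix (Fin 2 × Fin 2 × Fin 2) (Fin 2 × Fin 2 × Fin 2) ℂ :=
  S0 ⊗ₖ (I2 ⊗ₖ I2) + S3 ⊗ₖ (S0 ⊗ₖ S0 + S1 ⊗ₖ S2 + S2 ⊗ₖ S1 + S3 ⊗ₖ S3)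

/-!
The swap gate equals `½ (I ⊗ I + σ₁ ⊗ σ₁ + σ₂ ⊗ σ₂ + σ₃ ⊗ σ₃)`, which writes `F₃` as a sum of four
product operators. Conversely, fix the entry `(1, 1)` of the first tensor factor and realign the
other two, sending the `((b, c), (b', c'))` entry to position `((b, b'), (c, c'))`. Each product
operator `A ⊗ B ⊗ C` becomes a matrix of rank at most one, while `F₃` becomes the permutation
matrix of `Prod.swap`, of rank 4; so `F₃` needs at least four product terms.
-/

namespace Matrix

variable {R l m n ι : Type*}

theorem rank_add_le [Field R] [Fintype n] (A B : Matrix m n R) :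
    (A + B).rank ≤ A.rank + B.rank := by
  rw [rank, rank, rank, mulVecLin_add]
  refine le_trans (Submodule.finrank_mono ?_) (Submodule.finrank_add_le_finrank_add_finrank _ _)
  rintro _ ⟨x, rfl⟩
  exact Submodule.mem_sup.2 ⟨_, ⟨x, rfl⟩, _, ⟨x, rfl⟩, rfl⟩

theorem rank_sum_le [Field R] [Fintype n] (s : Finset ι) (A : ι → Matrix m n R) :
    (∑ j ∈ s, A j).rank ≤ ∑ j ∈ s, (A j).rank :=
  Finset.sum_hom_rel (r := fun (M : Matrix m n R) k => M.rank ≤ k) rank_zero.le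
    fun _ _ _ h => (rank_add_le _ _).trans (by gcongr)

def realign (U : Matrix (l × n × n) (m × n × n) R) (a : l) (a' : m) :
    Matrix (n × n) (n × n) R :=
  of fun p q => U (a, p.1, q.1) (a', p.2, q.2)

theorem realign_sum [AddCommMonoid R] (s : Finset ι) (U : ι → Matrix (l × n × n) (m × n × n) R)
    (a : l) (a' : m) : realign (∑ j ∈ s, U j) a a' = ∑ j ∈ s, realign (U j) a a' := by
  ext p q
  simp [realign, sum_apply]

theorem realign_kronecker [CommSemiring R] (A : Matrix l m R) (B C : Matrix n n R)
    (a : l) (a' : m) :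
    realign (A ⊗ₖ (B ⊗ₖ C)) a a' =
      A a a' • vecMulVec (fun p : n × n => B p.1 p.2) (fun q : n × n => C q.1 q.2) := by
  ext p q
  simp [realign, vecMulVec_apply]

theorem rank_realign_sum_kronecker_le [Field R] [Fintype n] {r : ℕ}
    (A : Fin r → Matrix l m R) (B C : Fin r → Matrix n n R) (a : l) (a' : m) :
    (realign (∑ j, A j ⊗ₖ (B j ⊗ₖ C j)) a a').rank ≤ r := by
  simp only [realign_sum, realign_kronecker, ← vecMulVec_smul]
  calc _ ≤ ∑ _j : Fin r, 1 :=
        (rank_sum_le _ _).trans (Finset.sum_le_sum fun _ _ => rank_vecMulVec_le _ _)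
    _ = r := by simp

end Matrix

theorem swap_eq_half_sum_pauli :
    S0 ⊗ₖ S0 + S1 ⊗ₖ S2 + S2 ⊗ₖ S1 + S3 ⊗ₖ S3 =
      (1 / 2 : ℂ) • (I2 ⊗ₖ I2 + σ1 ⊗ₖ σ1 + σ2 ⊗ₖ σ2 + σ3 ⊗ₖ σ3) := by
  ext ⟨i, j⟩ ⟨i', j'⟩
  fin_cases i <;> fin_cases j <;> fin_cases i' <;> fin_cases j' <;>
    simp [S0, S1, S2, S3, σ1, σ2, σ3, I2, one_apply] <;> ring_nf

theorem F₃_eq_sum_kronecker_pauli :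
    F₃ = ∑ j, ![S0 + (1 / 2 : ℂ) • S3, (1 / 2 : ℂ) • S3, (1 / 2 : ℂ) • S3, (1 / 2 : ℂ) • S3] j ⊗ₖ
      (![I2, σ1, σ2, σ3] j ⊗ₖ ![I2, σ1, σ2, σ3] j) := by
  rw [F₃, swap_eq_half_sum_pauli]
  simp only [Fin.sum_univ_four, cons_val_zero, cons_val_one, cons_val, add_kronecker, kronecker_add,
    smul_kronecker, kronecker_smul]
  module

theorem realign_F₃ :
    realign F₃ 1 1 = (1 : Matrix (Fin 2 × Fin 2) (Fin 2 × Fin 2) ℂ).submatrix id Prod.swap := by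
  ext ⟨b, b'⟩ ⟨c, c'⟩
  fin_cases b <;> fin_cases b' <;> fin_cases c <;> fin_cases c' <;>
    simp [realign, F₃, S0, S1, S2, S3, I2, one_apply]

theorem rank_realign_F₃ : (realign F₃ 1 1).rank = 4 := by
  rw [realign_F₃]
  exact (rank_submatrix 1 (Equiv.refl _) (Equiv.prodComm _ _)).trans (by simp)

theorem stmt12 : sr F₃ = 4 := by
  have hdecomp : 4 ∈ {r | ∃ A B C : Fin r → Matrix (Fin 2) (Fin 2) ℂ,
      F₃ = ∑ j, A j ⊗ₖ (B j ⊗ₖ C j)} := ⟨_, _, _, F₃_eq_sum_kronecker_pauli⟩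
  refine le_antisymm (Nat.sInf_le hdecomp) (le_csInf ⟨4, hdecomp⟩ ?_)
  rintro r ⟨A, B, C, hF⟩
  calc 4 = (realign F₃ 1 1).rank := rank_realign_F₃.symm
    _ ≤ r := hF ▸ rank_realign_sum_kronecker_le A B C 1 1
end

section
/- Let V, W, X and V₁, W₁, X₁ and V₂, W₂, X₂ be arbitrary 2×2 unitary complex matrices, and let T = S₀⊗I₂ + S₃⊗σ₁ denote the CNOT gate. Then the 8×8 unitary matrix M₁ = (V₁⊗W₁⊗X₁)·(T⊗I₂)·(V⊗W⊗X)·(I₂⊗T)·(V₂⊗W₂⊗X₂) has Schmidt rank 1, 2, or 4. -/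
open Matrix Kronecker Complex

/-- Reassociation `((ℂ²⊗ℂ²)⊗ℂ²) ≃ (ℂ²⊗(ℂ²⊗ℂ²))` at the level of matrix indices. -/
def matAssoc (M : Matrix ((Fin 2 × Fin 2) × Fin 2) ((Fin 2 × Fin 2) × Fin 2) ℂ) :
    Matrix (Fin 2 × Fin 2 × Fin 2) (Fin 2 × Fin 2 × Fin 2) ℂ :=
  Matrix.reindex (Equiv.prodAssoc (Fin 2) (Fin 2) (Fin 2))
    (Equiv.prodAssoc (Fin 2) (Fin 2) (Fin 2)) M

/-- The CNOT gate as a 4×4 matrix. -/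
def Tcnot : Matrix (Fin 2 × Fin 2) (Fin 2 × Fin 2) ℂ := S0 ⊗ₖ I2 + S3 ⊗ₖ σ1

/-!
Moving `V` through `I₂ ⊗ T` and `X` through `T ⊗ I₂`, and absorbing all the outer local
factors (Schmidt rank is invariant under invertible local factors), `M₁` has the Schmidt rank of
the core `(T ⊗ I₂)(I₂ ⊗ W ⊗ I₂)(I₂ ⊗ T) = ∑_{a,b} S_a ⊗ σ₁ᵃ W S_b ⊗ σ₁ᵇ`.
A decomposition into `r` product terms factors the flattening of the middle tensor factor
against the outer two through `ℂʳ`, so the rank of that flattening bounds the Schmidt rank from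
below. If no column of `W` is an eigenvector of `σ₁`, a block-diagonal `4 × 4` minor of the
flattening is nonsingular and the rank is `4`. For unitary `W` the two columns are eigenvectors
simultaneously, with opposite eigenvalues `±ε`; then the four terms pair up into two, and a
diagonal `2 × 2` minor shows that the rank is exactly `2`.
-/

local notation "𝕄₂" => Matrix (Fin 2) (Fin 2) ℂ
local notation "𝕄₈" => Matrix (Fin 2 × Fin 2 × Fin 2) (Fin 2 × Fin 2 × Fin 2) ℂ

section SchmidtRank

variable (U : 𝕄₈)

-- Guarantees that `sr U` is an attained minimum rather than the junk value `sInf ∅ = 0`.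
lemma exists_eq_sum_kronecker :
    ∃ r, ∃ A B C : Fin r → 𝕄₂, U = ∑ j, A j ⊗ₖ (B j ⊗ₖ C j) := by
  let e := Fintype.equivFin ((Fin 2 × Fin 2 × Fin 2) × (Fin 2 × Fin 2 × Fin 2))
  refine ⟨_, fun j => single (e.symm j).1.1 (e.symm j).2.1 (U (e.symm j).1 (e.symm j).2),
    fun j => single (e.symm j).1.2.1 (e.symm j).2.2.1 1,
    fun j => single (e.symm j).1.2.2 (e.symm j).2.2.2 1, ?_⟩
  simp only [single_kronecker_single, mul_one]
  rw [e.symm.sum_comp fun ij => single ij.1 ij.2 (U ij.1 ij.2), Fintype.sum_prod_type]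
  exact matrix_eq_sum_single U

lemma exists_eq_sum_kronecker_sr :
    ∃ A B C : Fin (sr U) → 𝕄₂, U = ∑ j, A j ⊗ₖ (B j ⊗ₖ C j) :=
  Nat.sInf_mem (exists_eq_sum_kronecker U)

variable {U} in
lemma sr_le_of_eq_sum {r : ℕ} (A B C : Fin r → 𝕄₂) (h : U = ∑ j, A j ⊗ₖ (B j ⊗ₖ C j)) :
    sr U ≤ r :=
  Nat.sInf_le ⟨A, B, C, h⟩

lemma sr_kronecker_mul_mul_kronecker_le (a b c a' b' c' : 𝕄₂) :
    sr ((a ⊗ₖ (b ⊗ₖ c)) * U * (a' ⊗ₖ (b' ⊗ₖ c'))) ≤ sr U := by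
  obtain ⟨A, B, C, hU⟩ := exists_eq_sum_kronecker_sr U
  refine sr_le_of_eq_sum (fun j => a * A j * a') (fun j => b * B j * b') (fun j => c * C j * c') ?_
  simp only [hU, Finset.mul_sum, Finset.sum_mul, mul_kronecker_mul]

lemma sr_kronecker_mul_mul_kronecker {a b c a' b' c' : 𝕄₂} (ha : IsUnit a) (hb : IsUnit b)
    (hc : IsUnit c) (ha' : IsUnit a') (hb' : IsUnit b') (hc' : IsUnit c') :
    sr ((a ⊗ₖ (b ⊗ₖ c)) * U * (a' ⊗ₖ (b' ⊗ₖ c'))) = sr U := by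
  obtain ⟨a, rfl⟩ := ha; obtain ⟨b, rfl⟩ := hb; obtain ⟨c, rfl⟩ := hc
  obtain ⟨a', rfl⟩ := ha'; obtain ⟨b', rfl⟩ := hb'; obtain ⟨c', rfl⟩ := hc'
  refine (sr_kronecker_mul_mul_kronecker_le U _ _ _ _ _ _).antisymm ?_
  calc sr U = sr ((↑a⁻¹ ⊗ₖ (↑b⁻¹ ⊗ₖ ↑c⁻¹)) *
        ((↑a ⊗ₖ (↑b ⊗ₖ ↑c)) * U * (↑a' ⊗ₖ (↑b' ⊗ₖ ↑c'))) * (↑a'⁻¹ ⊗ₖ (↑b'⁻¹ ⊗ₖ ↑c'⁻¹))) := by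
        simp only [← Matrix.mul_assoc, ← mul_kronecker_mul, Units.inv_mul, one_kronecker_one,
          Matrix.one_mul]
        simp only [Matrix.mul_assoc, ← mul_kronecker_mul, Units.mul_inv, one_kronecker_one,
          Matrix.mul_one]
    _ ≤ _ := sr_kronecker_mul_mul_kronecker_le _ _ _ _ _ _ _

end SchmidtRank

section Flatten

variable {ι α β γ α' β' γ' R : Type*}

def flattenMid (U : Matrix (α × β × γ) (α' × β' × γ') R) :
    Matrix (β × β') ((α × α') × (γ × γ')) R :=
  Matrix.of fun b ac => U (ac.1.1, b.1, ac.2.1) (ac.1.2, b.2, ac.2.2)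

lemma flattenMid_sum_kronecker [Fintype ι] [CommSemiring R] (A : ι → Matrix α α' R)
    (B : ι → Matrix β β' R) (C : ι → Matrix γ γ' R) :
    flattenMid (∑ j, A j ⊗ₖ (B j ⊗ₖ C j)) =
      (Matrix.of fun b j => B j b.1 b.2) *
        Matrix.of fun j ac => A j ac.1.1 ac.1.2 * C j ac.2.1 ac.2.2 := by
  ext b ac
  simp only [flattenMid, of_apply, Matrix.sum_apply, kroneckerMap_apply, mul_apply]
  exact Finset.sum_congr rfl fun j _ => by ring

lemma rank_flattenMid_sum_kronecker_le [Fintype ι] [Fintype α] [Fintype α'] [Fintype γ]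
    [Fintype γ'] [CommRing R] [StrongRankCondition R] (A : ι → Matrix α α' R)
    (B : ι → Matrix β β' R) (C : ι → Matrix γ γ' R) :
    (flattenMid (∑ j, A j ⊗ₖ (B j ⊗ₖ C j))).rank ≤ Fintype.card ι := by
  rw [flattenMid_sum_kronecker]
  exact (rank_mul_le_left _ _).trans (rank_le_card_width _)

end Flatten

lemma rank_flattenMid_le_sr (U : 𝕄₈) : (flattenMid U).rank ≤ sr U := by
  obtain ⟨A, B, C, hU⟩ := exists_eq_sum_kronecker_sr U
  simpa [hU] using rank_flattenMid_sum_kronecker_le A B C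

section UnitaryFinTwo

variable {α : Type*} [CommRing α] [StarRing α] {W : Matrix (Fin 2) (Fin 2) α}

lemma entries_of_mem_unitaryGroup_fin_two (hW : W ∈ unitaryGroup (Fin 2) α) :
    W 1 1 = W.det * star (W 0 0) ∧ W 0 1 = -(W.det * star (W 1 0)) := by
  have hadj : adjugate W = W.det • star W := by
    calc adjugate W = star W * W * adjugate W := by
          rw [(mem_unitaryGroup_iff').mp hW, Matrix.one_mul]
      _ = W.det • star W := by
          rw [Matrix.mul_assoc, mul_adjugate, Matrix.mul_smul, Matrix.mul_one]
  have h00 := congrFun₂ hadj 0 0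
  have h01 := congrFun₂ hadj 0 1
  simp only [adjugate_fin_two, of_apply, cons_val', cons_val_zero, cons_val_one,
    Matrix.smul_apply, star_apply, smul_eq_mul] at h00 h01
  exact ⟨h00, by rw [← h01, neg_neg]⟩

lemma sq_sub_sq_col_one_of_mem_unitaryGroup (hW : W ∈ unitaryGroup (Fin 2) α) :
    W 0 1 ^ 2 - W 1 1 ^ 2 = W.det ^ 2 * star (W 1 0 ^ 2 - W 0 0 ^ 2) := by
  obtain ⟨h11, h01⟩ := entries_of_mem_unitaryGroup_fin_two hW
  rw [h01, h11, star_sub, star_pow, star_pow]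
  ring

end UnitaryFinTwo

lemma det_ne_zero_of_mem_unitaryGroup {n α : Type*} [Fintype n] [DecidableEq n] [CommRing α]
    [StarRing α] [Nontrivial α] {W : Matrix n n α} (hW : W ∈ unitaryGroup n α) : W.det ≠ 0 :=
  (Unitary.isUnit_coe (U := ⟨W, hW⟩)).map detMonoidHom |>.ne_zero

lemma Tcnot_mem_unitaryGroup : Tcnot ∈ unitaryGroup (Fin 2 × Fin 2) ℂ := by
  rw [mem_unitaryGroup_iff', star_eq_conjTranspose]
  ext ⟨i₁, i₂⟩ ⟨j₁, j₂⟩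
  fin_cases i₁ <;> fin_cases i₂ <;> fin_cases j₁ <;> fin_cases j₂ <;>
    simp [Tcnot, mul_apply, Fintype.sum_prod_type, Fin.sum_univ_two, S0, S3, σ1, I2, one_apply]

lemma matAssoc_mem_unitaryGroup
    {M : Matrix ((Fin 2 × Fin 2) × Fin 2) ((Fin 2 × Fin 2) × Fin 2) ℂ}
    (hM : M ∈ unitaryGroup ((Fin 2 × Fin 2) × Fin 2) ℂ) :
    matAssoc M ∈ unitaryGroup (Fin 2 × Fin 2 × Fin 2) ℂ := by
  rw [mem_unitaryGroup_iff', star_eq_conjTranspose] at hM ⊢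
  rw [matAssoc, reindex_apply, conjTranspose_submatrix, submatrix_mul_equiv, hM,
    submatrix_one_equiv]

def cnotCore (W : 𝕄₂) : 𝕄₈ :=
  matAssoc (Tcnot ⊗ₖ I2) * (I2 ⊗ₖ (W ⊗ₖ I2)) * (I2 ⊗ₖ Tcnot)

lemma matAssoc_Tcnot_kronecker_I2 :
    matAssoc (Tcnot ⊗ₖ I2) = S0 ⊗ₖ (1 ⊗ₖ 1) + S3 ⊗ₖ (σ1 ⊗ₖ 1) := by
  simp only [matAssoc, reindex_apply, Tcnot, add_kronecker, submatrix_add, Pi.add_apply,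
    kronecker_assoc', I2]

lemma I2_kronecker_Tcnot : I2 ⊗ₖ Tcnot = 1 ⊗ₖ (S0 ⊗ₖ 1) + 1 ⊗ₖ (S3 ⊗ₖ σ1) := by
  simp only [Tcnot, I2, kronecker_add]

lemma cnotCore_eq (W : 𝕄₂) :
    cnotCore W = S0 ⊗ₖ ((W * S0) ⊗ₖ 1) + S0 ⊗ₖ ((W * S3) ⊗ₖ σ1) +
      S3 ⊗ₖ ((σ1 * W * S0) ⊗ₖ 1) + S3 ⊗ₖ ((σ1 * W * S3) ⊗ₖ σ1) := by
  rw [cnotCore, matAssoc_Tcnot_kronecker_I2, I2_kronecker_Tcnot]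
  simp only [mul_add, add_mul, ← mul_kronecker_mul, I2, Matrix.mul_one, Matrix.one_mul]
  abel

lemma circuit_eq_cnotCore (V W X V₁ W₁ X₁ V₂ W₂ X₂ : 𝕄₂) :
    (V₁ ⊗ₖ (W₁ ⊗ₖ X₁)) * matAssoc (Tcnot ⊗ₖ I2) * (V ⊗ₖ (W ⊗ₖ X)) * (I2 ⊗ₖ Tcnot) *
        (V₂ ⊗ₖ (W₂ ⊗ₖ X₂)) =
      (V₁ ⊗ₖ (W₁ ⊗ₖ (X₁ * X))) * cnotCore W * ((V * V₂) ⊗ₖ (W₂ ⊗ₖ X₂)) := by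
  rw [cnotCore_eq, matAssoc_Tcnot_kronecker_I2, I2_kronecker_Tcnot]
  simp only [mul_add, add_mul, ← mul_kronecker_mul, Matrix.mul_one, Matrix.mul_assoc]
  abel

lemma sr_cnotCore_le_four (W : 𝕄₂) : sr (cnotCore W) ≤ 4 :=
  sr_le_of_eq_sum ![S0, S0, S3, S3] ![W * S0, W * S3, σ1 * W * S0, σ1 * W * S3] ![1, σ1, 1, σ1]
    (by rw [cnotCore_eq, Fin.sum_univ_four]; rfl)

lemma sr_cnotCore_le_two {W : 𝕄₂} {ε : ℂ} (hε : ε ^ 2 = 1) (h0 : W 1 0 = ε * W 0 0)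
    (h1 : W 1 1 = -ε * W 0 1) : sr (cnotCore W) ≤ 2 := by
  have hS0 : σ1 * W * S0 = ε • (W * S0) := by
    ext i j
    fin_cases i <;> fin_cases j <;>
      simp [σ1, S0, mul_apply, vecMul, dotProduct, Fin.sum_univ_two, h0]
    linear_combination (-W 0 0) * hε
  have hS3 : σ1 * W * S3 = -ε • (W * S3) := by
    ext i j
    fin_cases i <;> fin_cases j <;>
      simp [σ1, S3, mul_apply, vecMul, dotProduct, Fin.sum_univ_two, h1]
    linear_combination (-W 0 1) * hε
  refine sr_le_of_eq_sum ![S0 + ε • S3, S0 + -ε • S3] ![W * S0, W * S3] ![1, σ1] ?_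
  rw [cnotCore_eq, hS0, hS3, Fin.sum_univ_two]
  simp only [cons_val_zero, cons_val_one, add_kronecker, smul_kronecker, kronecker_smul]
  abel

-- Column `(a, b)` of the minor comes from the term `S_a ⊗ σ₁ᵃ W S_b ⊗ σ₁ᵇ` alone.
lemma flattenMid_cnotCore_submatrix (W : 𝕄₂) :
    (flattenMid (cnotCore W)).submatrix id (fun ab : Fin 2 × Fin 2 => ((ab.1, ab.1), (0, ab.2))) =
      blockDiagonal fun b => !![W 0 b, W 1 b; W 1 b, W 0 b] := by
  ext ⟨i, j⟩ ⟨a, b⟩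
  rw [cnotCore_eq]
  fin_cases i <;> fin_cases j <;> fin_cases a <;> fin_cases b <;>
    simp [flattenMid, blockDiagonal_apply, S0, S3, σ1, mul_apply, vecMul, dotProduct,
      Fin.sum_univ_two]

lemma four_le_sr_cnotCore {W : 𝕄₂} (h0 : W 0 0 ^ 2 ≠ W 1 0 ^ 2) (h1 : W 0 1 ^ 2 ≠ W 1 1 ^ 2) :
    4 ≤ sr (cnotCore W) := by
  have hdet : (blockDiagonal fun b => !![W 0 b, W 1 b; W 1 b, W 0 b]).det ≠ 0 := by
    rw [det_blockDiagonal, Fin.prod_univ_two, det_fin_two_of, det_fin_two_of]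
    exact mul_ne_zero (by rwa [← sq, ← sq, sub_ne_zero]) (by rwa [← sq, ← sq, sub_ne_zero])
  calc 4 = (blockDiagonal fun b => !![W 0 b, W 1 b; W 1 b, W 0 b]).rank := by
        rw [rank_of_det_ne_zero hdet]; rfl
    _ ≤ (flattenMid (cnotCore W)).rank := by
        rw [← flattenMid_cnotCore_submatrix]; exact rank_submatrix_le _ _ _
    _ ≤ sr (cnotCore W) := rank_flattenMid_le_sr _

lemma two_le_sr_cnotCore {W : 𝕄₂} (h : W 0 0 * W 0 1 ≠ 0) : 2 ≤ sr (cnotCore W) := by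
  have hsub : (flattenMid (cnotCore W)).submatrix (fun b => (0, b))
      (fun b : Fin 2 => ((0, 0), (0, b))) = diagonal fun b => W 0 b := by
    ext i j
    rw [cnotCore_eq]
    fin_cases i <;> fin_cases j <;>
      simp [flattenMid, S0, S3, σ1, mul_apply, vecMul, dotProduct, Fin.sum_univ_two]
  calc 2 = (diagonal fun b => W 0 b).rank := by
        rw [rank_of_det_ne_zero (by rwa [det_diagonal, Fin.prod_univ_two])]; rfl
    _ ≤ (flattenMid (cnotCore W)).rank := by rw [← hsub]; exact rank_submatrix_le _ _ _
    _ ≤ sr (cnotCore W) := rank_flattenMid_le_sr _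

lemma sr_cnotCore_eq_two_or_four {W : 𝕄₂} (hW : W ∈ unitaryGroup (Fin 2) ℂ) :
    sr (cnotCore W) = 2 ∨ sr (cnotCore W) = 4 := by
  have hdet := det_ne_zero_of_mem_unitaryGroup hW
  by_cases hsq : W 0 0 ^ 2 = W 1 0 ^ 2
  · obtain ⟨h11, h01⟩ := entries_of_mem_unitaryGroup_fin_two hW
    obtain ⟨ε, hε, h0, h1⟩ :
        ∃ ε : ℂ, ε ^ 2 = 1 ∧ W 1 0 = ε * W 0 0 ∧ W 1 1 = -ε * W 0 1 := by
      rcases sq_eq_sq_iff_eq_or_eq_neg.mp hsq.symm with h | h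
      · exact ⟨1, one_pow 2, by rw [h, one_mul], by rw [h01, h, h11]; ring⟩
      · exact ⟨-1, by norm_num, by rw [h]; ring, by rw [h01, h, h11, star_neg]; ring⟩
    have hprod : W 0 0 * W 0 1 ≠ 0 := by
      have hdet' : W.det = -(2 * ε) * (W 0 0 * W 0 1) := by rw [det_fin_two, h0, h1]; ring
      exact right_ne_zero_of_mul (hdet' ▸ hdet)
    exact Or.inl (le_antisymm (sr_cnotCore_le_two hε h0 h1) (two_le_sr_cnotCore hprod))
  · have hsq' : W 0 1 ^ 2 ≠ W 1 1 ^ 2 := by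
      rw [Ne, ← sub_eq_zero, sq_sub_sq_col_one_of_mem_unitaryGroup hW, mul_eq_zero, star_eq_zero,
        sub_eq_zero, eq_comm (a := W 1 0 ^ 2)]
      exact not_or_intro (pow_ne_zero 2 hdet) hsq
    exact Or.inr (le_antisymm (sr_cnotCore_le_four W) (four_le_sr_cnotCore hsq hsq'))

theorem stmt14 (V W X V₁ W₁ X₁ V₂ W₂ X₂ : Matrix (Fin 2) (Fin 2) ℂ)
    (hV : V ∈ Matrix.unitaryGroup (Fin 2) ℂ) (hW : W ∈ Matrix.unitaryGroup (Fin 2) ℂ)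
    (hX : X ∈ Matrix.unitaryGroup (Fin 2) ℂ)
    (hV₁ : V₁ ∈ Matrix.unitaryGroup (Fin 2) ℂ) (hW₁ : W₁ ∈ Matrix.unitaryGroup (Fin 2) ℂ)
    (hX₁ : X₁ ∈ Matrix.unitaryGroup (Fin 2) ℂ)
    (hV₂ : V₂ ∈ Matrix.unitaryGroup (Fin 2) ℂ) (hW₂ : W₂ ∈ Matrix.unitaryGroup (Fin 2) ℂ)
    (hX₂ : X₂ ∈ Matrix.unitaryGroup (Fin 2) ℂ)
    (M₁ : Matrix (Fin 2 × Fin 2 × Fin 2) (Fin 2 × Fin 2 × Fin 2) ℂ)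
    (hM₁ : M₁ = (V₁ ⊗ₖ (W₁ ⊗ₖ X₁)) * matAssoc (Tcnot ⊗ₖ I2) * (V ⊗ₖ (W ⊗ₖ X)) *
      (I2 ⊗ₖ Tcnot) * (V₂ ⊗ₖ (W₂ ⊗ₖ X₂))) :
    M₁ ∈ Matrix.unitaryGroup (Fin 2 × Fin 2 × Fin 2) ℂ ∧
      (sr M₁ = 1 ∨ sr M₁ = 2 ∨ sr M₁ = 4) := by
  have hI2 : I2 ∈ unitaryGroup (Fin 2) ℂ := one_mem _
  have local_mem {A B C : 𝕄₂} (hA : A ∈ unitaryGroup (Fin 2) ℂ)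
      (hB : B ∈ unitaryGroup (Fin 2) ℂ) (hC : C ∈ unitaryGroup (Fin 2) ℂ) :
      A ⊗ₖ (B ⊗ₖ C) ∈ unitaryGroup (Fin 2 × Fin 2 × Fin 2) ℂ :=
    kronecker_mem_unitary hA (kronecker_mem_unitary hB hC)
  have isUnit_of_mem {A : 𝕄₂} (hA : A ∈ unitaryGroup (Fin 2) ℂ) : IsUnit A :=
    Unitary.isUnit_coe (U := ⟨A, hA⟩)
  subst hM₁
  refine ⟨?_, Or.inr ?_⟩
  · refine mul_mem (mul_mem (mul_mem (mul_mem (local_mem hV₁ hW₁ hX₁) ?_) (local_mem hV hW hX))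
      (kronecker_mem_unitary hI2 Tcnot_mem_unitaryGroup)) (local_mem hV₂ hW₂ hX₂)
    exact matAssoc_mem_unitaryGroup (kronecker_mem_unitary Tcnot_mem_unitaryGroup hI2)
  · rw [circuit_eq_cnotCore, sr_kronecker_mul_mul_kronecker _ (isUnit_of_mem hV₁)
      (isUnit_of_mem hW₁) (isUnit_of_mem (mul_mem hX₁ hX)) (isUnit_of_mem (mul_mem hV hV₂))
      (isUnit_of_mem hW₂) (isUnit_of_mem hX₂)]
    exact sr_cnotCore_eq_two_or_four hW
end
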